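/- Take r = (0,…,0). Let I be an ideal of K{X}° and N a positive integer, and set I_N = I + π^N K{X}°. Then LT(I_N) is the ideal of the monoid T° generated by LT(I) together with the term π^N; consequently, if H is a Gröbner basis of I, then H ∪ {π^N} is a Gröbner basis of I_N. -/

import Mathlib

open MvPowerSeries

noncomputable section

/-- A normalized discrete valuation on a field `K`, complete with respect to
the associated distance. -/
structure IsCDVField {K : Type*} [Field K] (val : K → WithTop ℤ) : Prop where
  eq_top_iff : ∀ x : K, val x = ⊤ ↔ x = 0
  map_one : val 1 = 0
  map_mul : ∀ x y : K, val (x * y) = val x + val y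
  min_le_val_add : ∀ x y : K, min (val x) (val y) ≤ val (x + y)
  surjective : ∀ m : ℤ, ∃ x : K, val x = (m : WithTop ℤ)
  complete : ∀ u : ℕ → K,
      (∀ M : ℤ, ∃ N : ℕ, ∀ p, N ≤ p → ∀ q, N ≤ q → (M : WithTop ℤ) ≤ val (u p - u q)) →
      ∃ l : K, ∀ M : ℤ, ∃ N : ℕ, ∀ p, N ≤ p → (M : WithTop ℤ) ≤ val (u p - l)

/-- A monomial order: a well-order compatible with addition. -/
structure IsMonomialOrder {M : Type*} [AddCommMonoid M] (mo : M → M → Prop) : Prop where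
  refl : ∀ i, mo i i
  trans : ∀ i j k, mo i j → mo j k → mo i k
  antisymm : ∀ i j, mo i j → mo j i → i = j
  total : ∀ i j, mo i j ∨ mo j i
  add_right : ∀ i j k, mo i j → mo (i + k) (j + k)
  wf : WellFounded fun i j => mo i j ∧ i ≠ j

variable {K : Type*} [Field K] {n : ℕ}

/-- The valuation of `K`, with values in `WithTop ℚ`. -/
def valQ (val : K → WithTop ℤ) (a : K) : WithTop ℚ :=
  WithTop.map (fun m : ℤ => (m : ℚ)) (val a)

/-- The dot product `r·i`. -/
def wt (r : Fin n → ℚ) (i : Fin n →₀ ℕ) : ℚ :=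
  ∑ j, r j * (i j : ℚ)

/-- `val_r` of the term `a·X^i`, namely `val a - r·i`. -/
def tval (val : K → WithTop ℤ) (r : Fin n → ℚ) (a : K) (i : Fin n →₀ ℕ) : WithTop ℚ :=
  valQ val a + ((-wt r i : ℚ) : WithTop ℚ)

/-- `val_r` of the coefficient term of `f` at exponent `i`. -/
def cval (val : K → WithTop ℤ) (r : Fin n → ℚ) (f : MvPowerSeries (Fin n) K)
    (i : Fin n →₀ ℕ) : WithTop ℚ :=
  tval val r (MvPowerSeries.coeff (R := K) i f) i

/-- Membership in the Tate algebra `K{X; r}`: the coefficient valuations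
`val(a_i) - r·i` tend to `+∞`, i.e. for each `C` only finitely many of them are `< C`. -/
def IsTate (val : K → WithTop ℤ) (r : Fin n → ℚ) (f : MvPowerSeries (Fin n) K) : Prop :=
  ∀ C : ℚ, {i : Fin n →₀ ℕ | cval val r f i < (C : WithTop ℚ)}.Finite

/-- The Tate algebra `K{X; r}`, as a subset of the ring of power series. -/
def TateSet (val : K → WithTop ℤ) (r : Fin n → ℚ) : Set (MvPowerSeries (Fin n) K) :=
  {f | IsTate val r f}

/-- The integral Tate algebra `K{X; r}°` (Tate series of nonnegative Gauss valuation). -/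
def TateIntSet (val : K → WithTop ℤ) (r : Fin n → ℚ) : Set (MvPowerSeries (Fin n) K) :=
  {f | IsTate val r f ∧ ∀ i, (0 : WithTop ℚ) ≤ cval val r f i}

/-- The Gauss valuation of `f` equals `v`. -/
def GaussValEq (val : K → WithTop ℤ) (r : Fin n → ℚ) (f : MvPowerSeries (Fin n) K)
    (v : ℚ) : Prop :=
  (∀ i, (v : WithTop ℚ) ≤ cval val r f i) ∧ ∃ i, cval val r f i = (v : WithTop ℚ)

/-- `J` is an ideal of the subring `A` of the power series ring. -/
structure IsIdealOf (A J : Set (MvPowerSeries (Fin n) K)) : Prop where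
  subset : J ⊆ A
  zero_mem : (0 : MvPowerSeries (Fin n) K) ∈ J
  add_mem : ∀ f ∈ J, ∀ g ∈ J, f + g ∈ J
  neg_mem : ∀ f ∈ J, -f ∈ J
  smul_mem : ∀ a ∈ A, ∀ f ∈ J, a * f ∈ J

/-- `a·X^i < b·X^j` for the term order attached to `val`, `r` and the monomial order `mo`. -/
def TermLt (val : K → WithTop ℤ) (r : Fin n → ℚ) (mo : (Fin n →₀ ℕ) → (Fin n →₀ ℕ) → Prop)
    (a : K) (i : Fin n →₀ ℕ) (b : K) (j : Fin n →₀ ℕ) : Prop :=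
  tval val r b j < tval val r a i ∨ (tval val r a i = tval val r b j ∧ i ≠ j ∧ mo i j)

/-- `a·X^i ≤ b·X^j` for the term order. -/
def TermLe (val : K → WithTop ℤ) (r : Fin n → ℚ) (mo : (Fin n →₀ ℕ) → (Fin n →₀ ℕ) → Prop)
    (a : K) (i : Fin n →₀ ℕ) (b : K) (j : Fin n →₀ ℕ) : Prop :=
  tval val r b j < tval val r a i ∨ (tval val r a i = tval val r b j ∧ mo i j)

/-- `a·X^i` is the leading term of `f`. -/
def IsLeadingTerm (val : K → WithTop ℤ) (r : Fin n → ℚ)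
    (mo : (Fin n →₀ ℕ) → (Fin n →₀ ℕ) → Prop)
    (f : MvPowerSeries (Fin n) K) (a : K) (i : Fin n →₀ ℕ) : Prop :=
  MvPowerSeries.coeff (R := K) i f = a ∧ a ≠ 0 ∧
    ∀ j, MvPowerSeries.coeff (R := K) j f ≠ 0 → j ≠ i →
      TermLt val r mo (MvPowerSeries.coeff (R := K) j f) j a i

/-- `a·X^i` divides `b·X^j` in the monoid of terms `T(r)`. -/
def TDiv (a : K) (i : Fin n →₀ ℕ) (b : K) (j : Fin n →₀ ℕ) : Prop :=
  a ≠ 0 ∧ b ≠ 0 ∧ ∃ k, j = i + k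

/-- `a·X^i` divides `b·X^j` in the monoid of integral terms `T°(r)`. -/
def TIntDiv (val : K → WithTop ℤ) (r : Fin n → ℚ) (a : K) (i : Fin n →₀ ℕ)
    (b : K) (j : Fin n →₀ ℕ) : Prop :=
  a ≠ 0 ∧ b ≠ 0 ∧ ∃ k, j = i + k ∧ (0 : WithTop ℚ) ≤ tval val r (b * a⁻¹) k

/-- `g` is a Gröbner basis of `J`, as an ideal of `K{X;r}`. -/
def IsGB (val : K → WithTop ℤ) (r : Fin n → ℚ) (mo : (Fin n →₀ ℕ) → (Fin n →₀ ℕ) → Prop)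
    (J : Set (MvPowerSeries (Fin n) K)) {s : ℕ} (g : Fin s → MvPowerSeries (Fin n) K) : Prop :=
  (∀ k, g k ∈ J ∧ g k ≠ 0) ∧
    ∀ f ∈ J, ∀ a i, IsLeadingTerm val r mo f a i →
      ∃ k b j, IsLeadingTerm val r mo (g k) b j ∧ TDiv b j a i

/-- `g` is a Gröbner basis of `J`, as an ideal of `K{X;r}°`. -/
def IsGBInt (val : K → WithTop ℤ) (r : Fin n → ℚ) (mo : (Fin n →₀ ℕ) → (Fin n →₀ ℕ) → Prop)
    (J : Set (MvPowerSeries (Fin n) K)) {s : ℕ} (g : Fin s → MvPowerSeries (Fin n) K) : Prop :=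
  (∀ k, g k ∈ J ∧ g k ≠ 0) ∧
    ∀ f ∈ J, ∀ a i, IsLeadingTerm val r mo f a i →
      ∃ k b j, IsLeadingTerm val r mo (g k) b j ∧ TIntDiv val r b j a i

/-- The set `LT(J)` of leading terms of nonzero elements of `J`. -/
def LTSet (val : K → WithTop ℤ) (r : Fin n → ℚ) (mo : (Fin n →₀ ℕ) → (Fin n →₀ ℕ) → Prop)
    (J : Set (MvPowerSeries (Fin n) K)) : Set (K × (Fin n →₀ ℕ)) :=
  {t | ∃ f ∈ J, IsLeadingTerm val r mo f t.1 t.2}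

/-- Exponents of elements of `LT(J)`: the image of `LT(J)` modulo units of `K`. -/
def LTExpSet (val : K → WithTop ℤ) (r : Fin n → ℚ) (mo : (Fin n →₀ ℕ) → (Fin n →₀ ℕ) → Prop)
    (J : Set (MvPowerSeries (Fin n) K)) : Set (Fin n →₀ ℕ) :=
  {i | ∃ a, (a, i) ∈ LTSet val r mo J}

/-- The skeleton of `LT(J)` (modulo units of `K`): minimal elements for divisibility. -/
def SkelExp (val : K → WithTop ℤ) (r : Fin n → ℚ) (mo : (Fin n →₀ ℕ) → (Fin n →₀ ℕ) → Prop)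
    (J : Set (MvPowerSeries (Fin n) K)) : Set (Fin n →₀ ℕ) :=
  {i | i ∈ LTExpSet val r mo J ∧ ∀ j ∈ LTExpSet val r mo J, (∃ k, i = j + k) → j = i}

/-- The image of `LT(J)` modulo units of `K°`: pairs (exponent, valuation of the term). -/
def LTClassSet (val : K → WithTop ℤ) (r : Fin n → ℚ) (mo : (Fin n →₀ ℕ) → (Fin n →₀ ℕ) → Prop)
    (J : Set (MvPowerSeries (Fin n) K)) : Set ((Fin n →₀ ℕ) × ℚ) :=
  {c | ∃ a, (a, c.1) ∈ LTSet val r mo J ∧ tval val r a c.1 = (c.2 : WithTop ℚ)}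

/-- Divisibility of classes of integral terms modulo units of `K°`. -/
def ClassDiv {n : ℕ} (c d : (Fin n →₀ ℕ) × ℚ) : Prop :=
  (∃ k, d.1 = c.1 + k) ∧ c.2 ≤ d.2

/-- The skeleton of `LT(J)` modulo units of `K°`. -/
def SkelClass (val : K → WithTop ℤ) (r : Fin n → ℚ) (mo : (Fin n →₀ ℕ) → (Fin n →₀ ℕ) → Prop)
    (J : Set (MvPowerSeries (Fin n) K)) : Set ((Fin n →₀ ℕ) × ℚ) :=
  {c | c ∈ LTClassSet val r mo J ∧ ∀ d ∈ LTClassSet val r mo J, ClassDiv d c → d = c}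

/-- Minimal Gröbner basis of an ideal of `K{X;r}`: the classes of the leading terms
modulo units of `K` are pairwise distinct and are exactly the skeleton of `LT(J)`. -/
def IsMinGB (val : K → WithTop ℤ) (r : Fin n → ℚ) (mo : (Fin n →₀ ℕ) → (Fin n →₀ ℕ) → Prop)
    (J : Set (MvPowerSeries (Fin n) K)) {s : ℕ} (g : Fin s → MvPowerSeries (Fin n) K) : Prop :=
  IsGB val r mo J g ∧ ∃ e : Fin s → (Fin n →₀ ℕ),
    (∀ k, ∃ a, IsLeadingTerm val r mo (g k) a (e k)) ∧
    Function.Injective e ∧ Set.range e = SkelExp val r mo J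

/-- Minimal Gröbner basis of an ideal of `K{X;r}°`. -/
def IsMinGBInt (val : K → WithTop ℤ) (r : Fin n → ℚ) (mo : (Fin n →₀ ℕ) → (Fin n →₀ ℕ) → Prop)
    (J : Set (MvPowerSeries (Fin n) K)) {s : ℕ} (g : Fin s → MvPowerSeries (Fin n) K) : Prop :=
  IsGBInt val r mo J g ∧ ∃ e : Fin s → ((Fin n →₀ ℕ) × ℚ),
    (∀ k, ∃ a, IsLeadingTerm val r mo (g k) a (e k).1 ∧
      tval val r a (e k).1 = ((e k).2 : WithTop ℚ)) ∧
    Function.Injective e ∧ Set.range e = SkelClass val r mo J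

/-- The leading term of `f` (via choice). -/
def leadTerm (val : K → WithTop ℤ) (r : Fin n → ℚ) (mo : (Fin n →₀ ℕ) → (Fin n →₀ ℕ) → Prop)
    (f : MvPowerSeries (Fin n) K) : K × (Fin n →₀ ℕ) :=
  Classical.epsilon fun p => IsLeadingTerm val r mo f p.1 p.2

/-- Multiplication of a power series by the term `t`. -/
def termMul (t : K × (Fin n →₀ ℕ)) (f : MvPowerSeries (Fin n) K) : MvPowerSeries (Fin n) K :=
  (MvPowerSeries.monomial (R := K) t.2 t.1) * f

/-- The S-polynomial `S(f, g) = (LT(g)/gcd(LT f, LT g))·f - (LT(f)/gcd(LT f, LT g))·g`. -/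
def Spoly (val : K → WithTop ℤ) (π : K) (r : Fin n → ℚ)
    (mo : (Fin n →₀ ℕ) → (Fin n →₀ ℕ) → Prop)
    (f g : MvPowerSeries (Fin n) K) : MvPowerSeries (Fin n) K :=
  let a := (leadTerm val r mo f).1
  let i := (leadTerm val r mo f).2
  let b := (leadTerm val r mo g).1
  let j := (leadTerm val r mo g).2
  let m : ℤ := min ((val a).untopD 0) ((val b).untopD 0)
  termMul (b * π ^ (-m), j - i) f - termMul (a * π ^ (-m), i - j) g

/-- `f` reduces to zero modulo the family `g` with quotients in `A`. -/
def ReducesToZero (val : K → WithTop ℤ) (r : Fin n → ℚ)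
    (mo : (Fin n →₀ ℕ) → (Fin n →₀ ℕ) → Prop) (A : Set (MvPowerSeries (Fin n) K))
    {s : ℕ} (g : Fin s → MvPowerSeries (Fin n) K) (f : MvPowerSeries (Fin n) K) : Prop :=
  f = 0 ∨ ∃ q : Fin s → MvPowerSeries (Fin n) K, (∀ k, q k ∈ A) ∧ f = ∑ k, q k * g k ∧
    ∀ k i, MvPowerSeries.coeff (R := K) i (q k) ≠ 0 →
      ∀ b j, IsLeadingTerm val r mo (g k) b j →
      ∀ a₀ i₀, IsLeadingTerm val r mo f a₀ i₀ →
        TermLe val r mo (MvPowerSeries.coeff (R := K) i (q k) * b) (i + j) a₀ i₀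

/-!
Let `u·X^i` be the leading term of `g + c·h` with `g ∈ I` and `h ∈ K{X}°`. If `val u ≥ val c`,
then `c` divides `u·X^i` in `T°`. Otherwise every term of `c·h` is strictly smaller than
`u·X^i`, so removing `c·h` does not change the leading term up to a unit of `K°`, and `u·X^i`
is associated to a leading term of `g ∈ I`. Conversely, a `T°`-multiple `t·LT(f)` is the leading
term of `t·f`, and a `T°`-multiple of `c` is a monomial of `c·K{X}°`. Transitivity of
divisibility in `T°` then turns a Gröbner basis of `I` into one of `I + c·K{X}°`.
-/

lemma wt_add (r : Fin n → ℚ) (i j : Fin n →₀ ℕ) : wt r (i + j) = wt r i + wt r j := by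
  simp only [wt, Finsupp.coe_add, Pi.add_apply, Nat.cast_add, mul_add, Finset.sum_add_distrib]

lemma wt_zero (r : Fin n → ℚ) : wt r 0 = 0 := by
  simp [wt]

namespace IsCDVField

variable {val : K → WithTop ℤ} {r : Fin n → ℚ}

def addValuationQ (hval : IsCDVField val) : AddValuation K (WithTop ℚ) :=
  (AddValuation.of val ((hval.eq_top_iff 0).2 rfl) hval.map_one hval.min_le_val_add
    hval.map_mul).map (Int.castAddHom ℚ).withTopMap rfl Int.cast_mono.withTop_map

lemma tval_eq (hval : IsCDVField val) (a : K) (i : Fin n →₀ ℕ) :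
    tval val r a i = hval.addValuationQ a + ((-wt r i : ℚ) : WithTop ℚ) := rfl

lemma tval_eq_top_iff (hval : IsCDVField val) {a : K} {i : Fin n →₀ ℕ} :
    tval val r a i = ⊤ ↔ a = 0 := by
  rw [tval_eq hval, WithTop.add_eq_top, or_iff_left WithTop.coe_ne_top, AddValuation.top_iff]

lemma tval_zero (hval : IsCDVField val) (i : Fin n →₀ ℕ) : tval val r 0 i = ⊤ :=
  (tval_eq_top_iff hval).2 rfl

lemma tval_one_zero (hval : IsCDVField val) : tval val r 1 (0 : Fin n →₀ ℕ) = 0 := by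
  rw [tval_eq hval, AddValuation.map_one, wt_zero, neg_zero, WithTop.coe_zero, add_zero]

lemma tval_mul_add (hval : IsCDVField val) (a b : K) (i j : Fin n →₀ ℕ) :
    tval val r (a * b) (i + j) = tval val r a i + tval val r b j := by
  simp only [tval_eq hval, AddValuation.map_mul, wt_add, neg_add, WithTop.coe_add]
  abel

lemma tval_neg (hval : IsCDVField val) (a : K) (i : Fin n →₀ ℕ) :
    tval val r (-a) i = tval val r a i := by
  rw [tval_eq hval, tval_eq hval, AddValuation.map_neg]

lemma min_le_tval_add (hval : IsCDVField val) (a b : K) (i : Fin n →₀ ℕ) :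
    min (tval val r a i) (tval val r b i) ≤ tval val r (a + b) i := by
  simp only [tval_eq hval, min_add_add_right]
  gcongr
  exact AddValuation.map_add _ a b

lemma tval_add_eq_of_lt (hval : IsCDVField val) {a b : K} {i : Fin n →₀ ℕ}
    (h : tval val r a i < tval val r b i) : tval val r (a + b) i = tval val r a i := by
  simp only [tval_eq hval] at h ⊢
  rw [AddValuation.map_add_eq_of_lt_left _ ((WithTop.add_lt_add_iff_right WithTop.coe_ne_top).1 h)]

lemma tintDiv_iff (hval : IsCDVField val) {a b : K} {i j : Fin n →₀ ℕ} :
    TIntDiv val r a i b j ↔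
      a ≠ 0 ∧ b ≠ 0 ∧ ∃ k, j = i + k ∧ tval val r a i ≤ tval val r b j := by
  refine and_congr_right fun ha => and_congr_right fun _ =>
    exists_congr fun k => and_congr_right fun hj => ?_
  have hfin : tval val r a i ≠ ⊤ := hval.tval_eq_top_iff.not.2 ha
  have hsplit : tval val r b j = tval val r (b * a⁻¹) k + tval val r a i := by
    rw [hj, add_comm i, ← hval.tval_mul_add, inv_mul_cancel_right₀ ha]
  rw [hsplit, ← WithTop.add_le_add_iff_right hfin, zero_add]

lemma tintDiv_trans (hval : IsCDVField val) {a b c : K} {i j l : Fin n →₀ ℕ}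
    (hab : TIntDiv val r a i b j) (hbc : TIntDiv val r b j c l) : TIntDiv val r a i c l := by
  obtain ⟨ha, -, k, rfl, hle⟩ := hval.tintDiv_iff.1 hab
  obtain ⟨-, hc, k', rfl, hle'⟩ := hval.tintDiv_iff.1 hbc
  exact hval.tintDiv_iff.2 ⟨ha, hc, k + k', add_assoc i k k', hle.trans hle'⟩

lemma monomial_mem_tateIntSet (hval : IsCDVField val) {c : K} {k : Fin n →₀ ℕ}
    (hc : 0 ≤ tval val r c k) : monomial k c ∈ TateIntSet val r := by
  classical
  have hcval : ∀ j, cval val r (monomial k c) j = if j = k then tval val r c k else ⊤ := by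
    intro j
    rw [cval, coeff_monomial]
    split_ifs with hjk
    · rw [hjk]
    · exact hval.tval_zero j
  refine ⟨fun C => (Set.finite_singleton k).subset fun j hj => ?_, fun j => ?_⟩
  · by_contra hjk
    have hj : cval val r (monomial k c) j < C := hj
    rw [hcval, if_neg (Set.mem_singleton_iff.not.1 hjk)] at hj
    exact not_top_lt hj
  · rw [hcval]
    split_ifs
    exacts [hc, le_top]

lemma zero_mem_tateIntSet (hval : IsCDVField val) :
    (0 : MvPowerSeries (Fin n) K) ∈ TateIntSet val r := by
  simpa using hval.monomial_mem_tateIntSet (r := r) (c := 0) (k := 0) (by simp [hval.tval_zero])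

lemma one_mem_tateIntSet (hval : IsCDVField val) :
    (1 : MvPowerSeries (Fin n) K) ∈ TateIntSet val r := by
  rw [← monomial_zero_one]
  exact hval.monomial_mem_tateIntSet hval.tval_one_zero.ge

end IsCDVField

section LeadingTerm

variable {val : K → WithTop ℤ} {r : Fin n → ℚ} {mo : (Fin n →₀ ℕ) → (Fin n →₀ ℕ) → Prop}
  {f e : MvPowerSeries (Fin n) K} {a c : K} {i : Fin n →₀ ℕ}

lemma IsLeadingTerm.ne_zero (hf : IsLeadingTerm val r mo f a i) : f ≠ 0 := by
  rintro rfl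
  exact hf.2.1 (by rw [← hf.1, map_zero])

lemma isLeadingTerm_monomial (ha : a ≠ 0) (i : Fin n →₀ ℕ) :
    IsLeadingTerm val r mo (monomial i a) a i := by
  classical
  refine ⟨coeff_monomial_same i a, ha, fun j hj hji => absurd ?_ hj⟩
  rw [coeff_monomial, if_neg hji]

lemma isLeadingTerm_C (hc : c ≠ 0) : IsLeadingTerm val r mo (C c) c 0 := by
  simpa only [monomial_zero_eq_C_apply] using isLeadingTerm_monomial hc 0

lemma IsLeadingTerm.monomial_mul (hval : IsCDVField val) (hmo : IsMonomialOrder mo)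
    (hf : IsLeadingTerm val r mo f a i) (hc : c ≠ 0) (k : Fin n →₀ ℕ) :
    IsLeadingTerm val r mo (monomial k c * f) (c * a) (k + i) := by
  obtain ⟨rfl, ha, hlt⟩ := hf
  refine ⟨coeff_add_monomial_mul _ _ _ _, mul_ne_zero hc ha, fun m hm hmi => ?_⟩
  rw [coeff_monomial_mul] at hm ⊢
  split_ifs at hm ⊢ with hkm
  · obtain ⟨j, rfl⟩ := le_iff_exists_add.1 hkm
    rw [add_tsub_cancel_left] at hm ⊢
    have hji : j ≠ i := by rintro rfl; exact hmi rfl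
    have hfin : tval val r c k ≠ ⊤ := hval.tval_eq_top_iff.not.2 hc
    rcases hlt j (right_ne_zero_of_mul hm) hji with hlt | ⟨heq, -, hmo_ji⟩
    · left
      rw [hval.tval_mul_add, hval.tval_mul_add]
      exact WithTop.add_lt_add_left hfin hlt
    · right
      refine ⟨by rw [hval.tval_mul_add, hval.tval_mul_add, heq], hmi, ?_⟩
      simpa only [add_comm _ k] using hmo.add_right j i k hmo_ji
  · exact absurd rfl hm

lemma IsLeadingTerm.add_of_lt_cval (hval : IsCDVField val) (hf : IsLeadingTerm val r mo f a i)
    (he : ∀ j, tval val r a i < cval val r e j) :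
    IsLeadingTerm val r mo (f + e) (a + coeff i e) i ∧
      tval val r (a + coeff i e) i = tval val r a i := by
  obtain ⟨rfl, ha, hlt⟩ := hf
  have hsame : tval val r (coeff i f + coeff i e) i = tval val r (coeff i f) i :=
    hval.tval_add_eq_of_lt (he i)
  refine ⟨⟨map_add _ _ _, ?_, fun j hj hji => ?_⟩, hsame⟩
  · exact (hval.tval_eq_top_iff (r := r) (i := i)).not.1 (hsame ▸ hval.tval_eq_top_iff.not.2 ha)
  rw [map_add] at hj ⊢
  unfold TermLt
  rw [hsame]
  by_cases hfj : coeff j f = 0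
  · left
    rw [hfj, zero_add]
    exact he j
  rcases hlt j hfj hji with hlt | ⟨heq, -, hmo_ji⟩
  · exact Or.inl ((lt_min hlt (he j)).trans_le (hval.min_le_tval_add _ _ _))
  · exact Or.inr ⟨by rw [hval.tval_add_eq_of_lt (heq ▸ he j), heq], hji, hmo_ji⟩

end LeadingTerm

/-- `J + c·K{X;r}°`; the paper's `I_N` is `addCMulTateInt val 0 I (π ^ N)`. -/
def addCMulTateInt (val : K → WithTop ℤ) (r : Fin n → ℚ) (J : Set (MvPowerSeries (Fin n) K))
    (c : K) : Set (MvPowerSeries (Fin n) K) :=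
  {f | ∃ g ∈ J, ∃ h ∈ TateIntSet val r, f = g + C c * h}

/-- The ideal of the monoid `T°(r)` generated by the terms in `S`. -/
def tIntSpan (val : K → WithTop ℤ) (r : Fin n → ℚ) (S : Set (K × (Fin n →₀ ℕ))) :
    Set (K × (Fin n →₀ ℕ)) :=
  {u | ∃ t ∈ S, TIntDiv val r t.1 t.2 u.1 u.2}

section AddCMulTateInt

variable {val : K → WithTop ℤ} {r : Fin n → ℚ} {mo : (Fin n →₀ ℕ) → (Fin n →₀ ℕ) → Prop}
  {I : Set (MvPowerSeries (Fin n) K)} {c : K}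

theorem ltSet_addCMulTateInt_subset (hval : IsCDVField val) (hc : c ≠ 0) :
    LTSet val r mo (addCMulTateInt val r I c) ⊆
      tIntSpan val r (LTSet val r mo I ∪ {(c, 0)}) := by
  rintro ⟨u, i⟩ ⟨_, ⟨g, hg, h, hh, rfl⟩, hlt⟩
  have hu : u ≠ 0 := hlt.2.1
  by_cases hci : tval val r c 0 ≤ tval val r u i
  · exact ⟨(c, 0), Or.inr rfl, hval.tintDiv_iff.2 ⟨hc, hu, i, (zero_add i).symm, hci⟩⟩
  push Not at hci
  have hsmall : ∀ j, tval val r u i < cval val r (-(C c * h)) j := fun j =>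
    calc tval val r u i < tval val r c 0 := hci
      _ ≤ tval val r c 0 + cval val r h j := le_add_of_nonneg_right (hh.2 j)
      _ = cval val r (-(C c * h)) j := by
        unfold cval
        rw [map_neg, coeff_C_mul, hval.tval_neg, ← hval.tval_mul_add, zero_add]
  obtain ⟨hltg, hsame⟩ := hlt.add_of_lt_cval hval hsmall
  rw [add_neg_cancel_right] at hltg
  exact ⟨(_, i), Or.inl ⟨g, hg, hltg⟩,
    hval.tintDiv_iff.2 ⟨hltg.2.1, hu, 0, (add_zero i).symm, hsame.le⟩⟩

theorem tIntSpan_subset_ltSet_addCMulTateInt (hval : IsCDVField val) (hmo : IsMonomialOrder mo)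
    (hI : IsIdealOf (TateIntSet val r) I) :
    tIntSpan val r (LTSet val r mo I ∪ {(c, 0)}) ⊆ LTSet val r mo (addCMulTateInt val r I c) := by
  rintro ⟨u, _⟩ ⟨⟨a, i⟩, ht, ha, hu, k, rfl, hk⟩
  dsimp only at ha hu hk ⊢
  have hmon : monomial k (u * a⁻¹) ∈ TateIntSet val r := hval.monomial_mem_tateIntSet hk
  rcases ht with ⟨f, hf, hlt⟩ | ht
  · refine ⟨_, ⟨_, hI.smul_mem _ hmon f hf, 0, hval.zero_mem_tateIntSet,
      by rw [mul_zero, add_zero]⟩, ?_⟩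
    have := hlt.monomial_mul hval hmo (mul_ne_zero hu (inv_ne_zero ha)) k
    rwa [inv_mul_cancel_right₀ ha, add_comm] at this
  · obtain ⟨rfl, rfl⟩ := Prod.mk.inj ht
    refine ⟨_, ⟨0, hI.zero_mem, _, hmon, (zero_add _).symm⟩, ?_⟩
    rw [← monomial_zero_eq_C_apply, monomial_mul_monomial, mul_comm u, mul_inv_cancel_left₀ ha]
    exact isLeadingTerm_monomial hu _

theorem ltSet_addCMulTateInt (hval : IsCDVField val) (hmo : IsMonomialOrder mo)
    (hI : IsIdealOf (TateIntSet val r) I) (hc : c ≠ 0) :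
    LTSet val r mo (addCMulTateInt val r I c) = tIntSpan val r (LTSet val r mo I ∪ {(c, 0)}) :=
  (ltSet_addCMulTateInt_subset hval hc).antisymm
    (tIntSpan_subset_ltSet_addCMulTateInt hval hmo hI)

theorem IsGBInt.snoc_C (hval : IsCDVField val) (hmo : IsMonomialOrder mo)
    (hI : IsIdealOf (TateIntSet val r) I) (hc : c ≠ 0) {s : ℕ}
    {g : Fin s → MvPowerSeries (Fin n) K} (hg : IsGBInt val r mo I g) :
    IsGBInt val r mo (addCMulTateInt val r I c) (Fin.snoc g (C c)) := by
  constructor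
  · intro k
    induction k using Fin.lastCases with
    | last =>
      rw [Fin.snoc_last]
      exact ⟨⟨0, hI.zero_mem, 1, hval.one_mem_tateIntSet, by rw [zero_add, mul_one]⟩,
        (isLeadingTerm_C (mo := mo) (val := val) (r := r) hc).ne_zero⟩
    | cast k =>
      rw [Fin.snoc_castSucc]
      exact ⟨⟨g k, (hg.1 k).1, 0, hval.zero_mem_tateIntSet, by rw [mul_zero, add_zero]⟩,
        (hg.1 k).2⟩
  intro f hf a i hlt
  obtain ⟨⟨b, j⟩, ht, hdiv⟩ : (a, i) ∈ tIntSpan val r (LTSet val r mo I ∪ {(c, 0)}) :=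
    ltSet_addCMulTateInt hval hmo hI hc ▸ ⟨f, hf, hlt⟩
  rcases ht with ⟨f', hf', hlt'⟩ | ht
  · obtain ⟨k, b', j', hk, hdiv'⟩ := hg.2 f' hf' b j hlt'
    exact ⟨k.castSucc, b', j', by rwa [Fin.snoc_castSucc], hval.tintDiv_trans hdiv' hdiv⟩
  · obtain ⟨rfl, rfl⟩ := Prod.mk.inj ht
    exact ⟨Fin.last s, b, 0, by rw [Fin.snoc_last]; exact isLeadingTerm_C hc, hdiv⟩

end AddCMulTateInt

theorem statement19_general (val : K → WithTop ℤ) (hval : IsCDVField val)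
    (π : K) (hπ : val π = (1 : ℤ))
    (mo : (Fin n →₀ ℕ) → (Fin n →₀ ℕ) → Prop) (hmo : IsMonomialOrder mo)
    (I : Set (MvPowerSeries (Fin n) K))
    (hI : IsIdealOf (TateIntSet val (0 : Fin n → ℚ)) I) (N : ℕ) :
    (LTSet val (0 : Fin n → ℚ) mo
        {f | ∃ g ∈ I, ∃ h ∈ TateIntSet val (0 : Fin n → ℚ),
          f = g + (MvPowerSeries.C (σ := Fin n) (R := K) (π ^ N)) * h}
      = {u | ∃ t₀ : K × (Fin n →₀ ℕ),
          (t₀ ∈ LTSet val (0 : Fin n → ℚ) mo I ∨ t₀ = (π ^ N, 0)) ∧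
          TIntDiv val (0 : Fin n → ℚ) t₀.1 t₀.2 u.1 u.2}) ∧
    (∀ (s : ℕ) (g : Fin s → MvPowerSeries (Fin n) K),
      IsGBInt val (0 : Fin n → ℚ) mo I g →
      IsGBInt val (0 : Fin n → ℚ) mo
        {f | ∃ g' ∈ I, ∃ h ∈ TateIntSet val (0 : Fin n → ℚ),
          f = g' + (MvPowerSeries.C (σ := Fin n) (R := K) (π ^ N)) * h}
        (Fin.snoc g (MvPowerSeries.C (σ := Fin n) (R := K) (π ^ N)))) := by
  have hπ0 : π ≠ 0 := by
    rintro rfl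
    rw [(hval.eq_top_iff 0).2 rfl] at hπ
    exact WithTop.top_ne_coe hπ
  have hc : π ^ N ≠ 0 := pow_ne_zero N hπ0
  exact ⟨ltSet_addCMulTateInt hval hmo hI hc, fun _ _ hg => hg.snoc_C hval hmo hI hc⟩

/-- (r = 0) for an ideal `I` of `K{X}°` and `I_N = I + π^N·K{X}°`,
the set `LT(I_N)` is the ideal of the monoid `T°` generated by `LT(I)` and `π^N`;
consequently, if `H` is a Gröbner basis of `I`, then `H ∪ {π^N}` is a Gröbner basis
of `I_N`. -/
theorem statement19 (val : K → WithTop ℤ) (hval : IsCDVField val)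
    (π : K) (hπ : val π = (1 : ℤ))
    (mo : (Fin n →₀ ℕ) → (Fin n →₀ ℕ) → Prop) (hmo : IsMonomialOrder mo)
    (I : Set (MvPowerSeries (Fin n) K))
    (hI : IsIdealOf (TateIntSet val (0 : Fin n → ℚ)) I) (N : ℕ) (hN : 0 < N) :
    (LTSet val (0 : Fin n → ℚ) mo
        {f | ∃ g ∈ I, ∃ h ∈ TateIntSet val (0 : Fin n → ℚ),
          f = g + (MvPowerSeries.C (σ := Fin n) (R := K) (π ^ N)) * h}
      = {u | ∃ t₀ : K × (Fin n →₀ ℕ),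
          (t₀ ∈ LTSet val (0 : Fin n → ℚ) mo I ∨ t₀ = (π ^ N, 0)) ∧
          TIntDiv val (0 : Fin n → ℚ) t₀.1 t₀.2 u.1 u.2}) ∧
    (∀ (s : ℕ) (g : Fin s → MvPowerSeries (Fin n) K),
      IsGBInt val (0 : Fin n → ℚ) mo I g →
      IsGBInt val (0 : Fin n → ℚ) mo
        {f | ∃ g' ∈ I, ∃ h ∈ TateIntSet val (0 : Fin n → ℚ),
          f = g' + (MvPowerSeries.C (σ := Fin n) (R := K) (π ^ N)) * h}
        (Fin.snoc g (MvPowerSeries.C (σ := Fin n) (R := K) (π ^ N)))) :=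
  statement19_general val hval π hπ mo hmo I hI N
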